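/- For 0 < ε < 1-p with 1/2 ≤ p < 1, the binary KL divergence satisfies ε²/(2p(1-p)) ≤ h_p(ε) ≤ ε²/(2p(1-p)) + 8ε³(2p + 2ε - 1) / (3(1 - 4(p + ε - 1/2)²)²). -/

import Mathlib

open Real Set

/-- If g 0 = 0 and g has nonnegative derivative on [0,ε], then g ≥ 0 on [0,ε]. -/
lemma kl_aux_nonneg_on {ε : ℝ} (g g' : ℝ → ℝ)
    (hg : ∀ t ∈ Icc (0:ℝ) ε, HasDerivAt g (g' t) t)
    (h0 : g 0 = 0) (hg' : ∀ t ∈ Icc (0:ℝ) ε, 0 ≤ g' t) :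
    ∀ t ∈ Icc (0:ℝ) ε, 0 ≤ g t := by
  intro t ht
  have h0ε : (0:ℝ) ≤ ε := le_trans ht.1 ht.2
  have hmono : MonotoneOn g (Icc 0 ε) := by
    apply monotoneOn_of_deriv_nonneg (convex_Icc 0 ε)
    · exact fun x hx => (hg x hx).continuousAt.continuousWithinAt
    · intro x hx
      rw [interior_Icc] at hx
      exact ((hg x (Ioo_subset_Icc_self hx)).differentiableAt).differentiableWithinAt
    · intro x hx
      rw [interior_Icc] at hx
      rw [(hg x (Ioo_subset_Icc_self hx)).deriv]
      exact hg' x (Ioo_subset_Icc_self hx)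
  have := hmono (left_mem_Icc.mpr h0ε) ht ht.1
  linarith

section
variable (p ε : ℝ)

/-- derivative of f(t) = (p+t) log((p+t)/p) + (1-p-t) log((1-p-t)/(1-p)) -/
lemma kl_aux_deriv1 (hp0 : 0 < p) (hq0 : 0 < 1 - p) (t : ℝ)
    (ht1 : 0 < p + t) (ht2 : 0 < 1 - p - t) :
    HasDerivAt (fun s => (p + s) * Real.log ((p + s) / p)
        + (1 - p - s) * Real.log ((1 - p - s) / (1 - p)))
      (Real.log ((p + t) / p) - Real.log ((1 - p - t) / (1 - p))) t := by
  have hA : HasDerivAt (fun s : ℝ => p + s) 1 t := (hasDerivAt_id t).const_add p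
  have hB : HasDerivAt (fun s : ℝ => 1 - p - s) (-1) t := by
    simpa using ((hasDerivAt_id t).const_sub (1 - p))
  have hA' : HasDerivAt (fun s : ℝ => (p + s) / p) (1 / p) t := hA.div_const p
  have hB' : HasDerivAt (fun s : ℝ => (1 - p - s) / (1 - p)) (-1 / (1 - p)) t :=
    hB.div_const (1 - p)
  have hlogA : HasDerivAt (fun s : ℝ => Real.log ((p + s) / p)) (1 / (p + t)) t := by
    have := hA'.log (by positivity)
    convert this using 1
    field_simp
    try ring
  have hlogB : HasDerivAt (fun s : ℝ => Real.log ((1 - p - s) / (1 - p)))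
      (-(1 / (1 - p - t))) t := by
    have := hB'.log (by positivity)
    convert this using 1
    field_simp
    try ring
  have h1 : HasDerivAt (fun s : ℝ => (p + s) * Real.log ((p + s) / p))
      (Real.log ((p + t) / p) + 1) t := by
    have := hA.mul hlogA
    refine this.congr_deriv ?_
    field_simp
    try ring
  have h2 : HasDerivAt (fun s : ℝ => (1 - p - s) * Real.log ((1 - p - s) / (1 - p)))
      (-Real.log ((1 - p - t) / (1 - p)) - 1) t := by
    have := hB.mul hlogB
    refine this.congr_deriv ?_
    field_simp
    try ring
  have := h1.add h2
  refine this.congr_deriv ?_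
  ring

lemma kl_aux_deriv2 (hp0 : 0 < p) (hq0 : 0 < 1 - p) (t : ℝ)
    (ht1 : 0 < p + t) (ht2 : 0 < 1 - p - t) :
    HasDerivAt (fun s => Real.log ((p + s) / p) - Real.log ((1 - p - s) / (1 - p)))
      (1 / (p + t) + 1 / (1 - p - t)) t := by
  have hA : HasDerivAt (fun s : ℝ => p + s) 1 t := (hasDerivAt_id t).const_add p
  have hB : HasDerivAt (fun s : ℝ => 1 - p - s) (-1) t := by
    simpa using ((hasDerivAt_id t).const_sub (1 - p))
  have hlogA : HasDerivAt (fun s : ℝ => Real.log ((p + s) / p)) (1 / (p + t)) t := by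
    have := (hA.div_const p).log (by positivity : (p + t) / p ≠ 0)
    convert this using 1
    field_simp
    try ring
  have hlogB : HasDerivAt (fun s : ℝ => Real.log ((1 - p - s) / (1 - p)))
      (-(1 / (1 - p - t))) t := by
    have := (hB.div_const (1 - p)).log (by positivity : (1 - p - t) / (1 - p) ≠ 0)
    convert this using 1
    field_simp
    try ring
  have := hlogA.sub hlogB
  refine this.congr_deriv ?_
  ring
end

theorem kl_quadratic_bounds (p ε : ℝ) (hp1 : 1 / 2 ≤ p) (hp2 : p < 1)
    (h1 : 0 < ε) (h2 : ε < 1 - p) :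
    ε ^ 2 / (2 * p * (1 - p)) ≤
      (p + ε) * Real.log ((p + ε) / p) + (1 - p - ε) * Real.log ((1 - p - ε) / (1 - p)) ∧
    (p + ε) * Real.log ((p + ε) / p) + (1 - p - ε) * Real.log ((1 - p - ε) / (1 - p)) ≤
      ε ^ 2 / (2 * p * (1 - p)) +
        8 * ε ^ 3 * (2 * p + 2 * ε - 1) / (3 * (1 - 4 * (p + ε - 1 / 2) ^ 2) ^ 2) := by
  have hp0 : 0 < p := by linarith
  have hq0 : 0 < 1 - p := by linarith
  have hεm : ε ∈ Icc (0:ℝ) ε := ⟨h1.le, le_refl ε⟩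
  have hmem : ∀ t ∈ Icc (0:ℝ) ε, 0 < p + t ∧ 0 < 1 - p - t := by
    intro t ht; exact ⟨by linarith [ht.1], by linarith [ht.2]⟩
  set f : ℝ → ℝ := fun s => (p + s) * Real.log ((p + s) / p)
      + (1 - p - s) * Real.log ((1 - p - s) / (1 - p)) with hf
  set f' : ℝ → ℝ := fun s => Real.log ((p + s) / p) - Real.log ((1 - p - s) / (1 - p)) with hf'
  have hDf : ∀ t ∈ Icc (0:ℝ) ε, HasDerivAt f (f' t) t := fun t ht =>
    kl_aux_deriv1 p hp0 hq0 t (hmem t ht).1 (hmem t ht).2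
  have hDf' : ∀ t ∈ Icc (0:ℝ) ε, HasDerivAt f' (1 / (p + t) + 1 / (1 - p - t)) t := fun t ht =>
    kl_aux_deriv2 p hp0 hq0 t (hmem t ht).1 (hmem t ht).2
  have hf0 : f 0 = 0 := by
    simp [hf, div_self hp0.ne', div_self hq0.ne']
  have hf'0 : f' 0 = 0 := by
    simp [hf', div_self hp0.ne', div_self hq0.ne']
  have hsum : ∀ t ∈ Icc (0:ℝ) ε,
      1 / (p + t) + 1 / (1 - p - t) = 1 / ((p + t) * (1 - p - t)) := by
    intro t ht
    obtain ⟨ha, hb⟩ := hmem t ht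
    rw [div_add_div _ _ ha.ne' hb.ne']
    have : 1 * (1 - p - t) + (p + t) * 1 = 1 := by ring
    rw [this]
  -- Lower bound
  have lower : ∀ t ∈ Icc (0:ℝ) ε, 0 ≤ f t - t ^ 2 / (2 * p * (1 - p)) := by
    apply kl_aux_nonneg_on _ (fun t => f' t - t / (p * (1 - p)))
    · intro t ht
      have hq : HasDerivAt (fun s : ℝ => s ^ 2 / (2 * p * (1 - p))) (t / (p * (1 - p))) t := by
        have hsq : HasDerivAt (fun s : ℝ => s ^ 2) (2 * t) t := by
          simpa using hasDerivAt_pow 2 t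
        have := hsq.div_const (2 * p * (1 - p))
        refine this.congr_deriv ?_
        field_simp
      exact (hDf t ht).sub hq
    · simp [hf0]
    · apply kl_aux_nonneg_on _
        (fun t => 1 / (p + t) + 1 / (1 - p - t) - 1 / (p * (1 - p)))
      · intro t ht
        have hlin : HasDerivAt (fun s : ℝ => s / (p * (1 - p))) (1 / (p * (1 - p))) t :=
          (hasDerivAt_id t).div_const _
        exact (hDf' t ht).sub hlin
      · simp [hf'0]
      · intro t ht
        have h := hmem t ht
        have key : (p + t) * (1 - p - t) ≤ p * (1 - p) := by nlinarith [ht.1]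
        have hpos : 0 < (p + t) * (1 - p - t) := mul_pos h.1 h.2
        have := one_div_le_one_div_of_le hpos key
        rw [hsum t ht]
        linarith
  -- Upper bound
  set D : ℝ := (p + ε) * (1 - p - ε) with hD
  have hDpos : 0 < D := mul_pos (by linarith) (by linarith)
  have upper : ∀ t ∈ Icc (0:ℝ) ε,
      0 ≤ t ^ 2 / (2 * p * (1 - p)) + ((2 * p - 1) * t ^ 3 / 6 + t ^ 4 / 12) / D ^ 2 - f t := by
    apply kl_aux_nonneg_on _
      (fun t => t / (p * (1 - p)) + ((2 * p - 1) * t ^ 2 / 2 + t ^ 3 / 3) / D ^ 2 - f' t)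
    · intro t ht
      have hpoly : HasDerivAt
          (fun s : ℝ => s ^ 2 / (2 * p * (1 - p)) + ((2 * p - 1) * s ^ 3 / 6 + s ^ 4 / 12) / D ^ 2)
          (t / (p * (1 - p)) + ((2 * p - 1) * t ^ 2 / 2 + t ^ 3 / 3) / D ^ 2) t := by
        have h1 : HasDerivAt (fun s : ℝ => s ^ 2) (2 * t) t := by
          simpa using hasDerivAt_pow 2 t
        have h2 : HasDerivAt (fun s : ℝ => s ^ 3) (3 * t ^ 2) t := by
          simpa using hasDerivAt_pow 3 t
        have h3 : HasDerivAt (fun s : ℝ => s ^ 4) (4 * t ^ 3) t := by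
          simpa using hasDerivAt_pow 4 t
        have := ((h1.div_const (2 * p * (1 - p))).add
          ((((h2.const_mul (2 * p - 1)).div_const 6).add (h3.div_const 12)).div_const (D ^ 2)))
        refine this.congr_deriv ?_
        have : p * (1 - p) ≠ 0 := by positivity
        field_simp
        ring
      exact hpoly.sub (hDf t ht)
    · simp [hf0]
    · apply kl_aux_nonneg_on _
        (fun t => 1 / (p * (1 - p)) + ((2 * p - 1) * t + t ^ 2) / D ^ 2
          - (1 / (p + t) + 1 / (1 - p - t)))
      · intro t ht
        have hpoly : HasDerivAt
            (fun s : ℝ => s / (p * (1 - p)) + ((2 * p - 1) * s ^ 2 / 2 + s ^ 3 / 3) / D ^ 2)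
            (1 / (p * (1 - p)) + ((2 * p - 1) * t + t ^ 2) / D ^ 2) t := by
          have h1 : HasDerivAt (fun s : ℝ => s ^ 2) (2 * t) t := by
            simpa using hasDerivAt_pow 2 t
          have h2 : HasDerivAt (fun s : ℝ => s ^ 3) (3 * t ^ 2) t := by
            simpa using hasDerivAt_pow 3 t
          have := (((hasDerivAt_id t).div_const (p * (1 - p))).add
            ((((h1.const_mul (2 * p - 1)).div_const 2).add (h2.div_const 3)).div_const (D ^ 2)))
          refine this.congr_deriv ?_
          field_simp
        exact hpoly.sub (hDf' t ht)
      · simp [hf'0]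
      · intro t ht
        have h := hmem t ht
        rw [hsum t ht]
        have hpos : 0 < (p + t) * (1 - p - t) := mul_pos h.1 h.2
        have hAB : D ^ 2 ≤ ((p + t) * (1 - p - t)) * (p * (1 - p)) := by
          have hA : D ≤ (p + t) * (1 - p - t) := by nlinarith [ht.2, ht.1]
          have hB : D ≤ p * (1 - p) := by nlinarith
          nlinarith
        have hid : 1 / ((p + t) * (1 - p - t)) - 1 / (p * (1 - p))
            = t * (2 * p - 1 + t) / (((p + t) * (1 - p - t)) * (p * (1 - p))) := by
          rw [div_sub_div _ _ hpos.ne' (by positivity)]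
          ring
        have hnum : 0 ≤ t * (2 * p - 1 + t) := by nlinarith [ht.1]
        have hfr : t * (2 * p - 1 + t) / (((p + t) * (1 - p - t)) * (p * (1 - p)))
            ≤ t * (2 * p - 1 + t) / D ^ 2 := by
          apply div_le_div_of_nonneg_left hnum (by positivity) hAB
        have hle : ((2 * p - 1) * t + t ^ 2) / D ^ 2 = t * (2 * p - 1 + t) / D ^ 2 := by
          ring_nf
        linarith [hid ▸ hfr]
  -- Conclude
  have hlow := lower ε hεm
  have hup := upper ε hεm
  constructor
  · linarith
  · have hD4 : 1 - 4 * (p + ε - 1 / 2) ^ 2 = 4 * D := by rw [hD]; ring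
    have hrw : 8 * ε ^ 3 * (2 * p + 2 * ε - 1) / (3 * (1 - 4 * (p + ε - 1 / 2) ^ 2) ^ 2)
        = ((2 * p - 1) * ε ^ 3 / 6 + ε ^ 4 / 3) / D ^ 2 := by
      rw [hD4]
      field_simp
      ring
    rw [hrw]
    have : ((2 * p - 1) * ε ^ 3 / 6 + ε ^ 4 / 12) / D ^ 2
        ≤ ((2 * p - 1) * ε ^ 3 / 6 + ε ^ 4 / 3) / D ^ 2 := by
      have h34 : (2 * p - 1) * ε ^ 3 / 6 + ε ^ 4 / 12
          ≤ (2 * p - 1) * ε ^ 3 / 6 + ε ^ 4 / 3 := by nlinarith [pow_pos h1 4]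
      exact div_le_div_of_nonneg_right h34 (by positivity)
    linarith
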